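/- In the max-cut reduction game, for any strategy profile in which for each vertex v exactly one player i_v produces output along α_v or β_v, the potential φ equals (4|V| + 3/2)·Σ_{e∈E} w_e + 2|V| + (1/2)·Σ_{(u,v)∈E, u∈S, v∈ S̄} w_{u,v}, where S = {v : player i_v produces along α_v} and S̄ = V \ S. Consequently, such a profile is a pure-strategy Nash equilibrium if and only if the cut (S, S̄) is locally optimal for max-cut (no single vertex move increases the cut weight). -/
import Mathlib


open Finset

noncomputable section MaxCutPotential

variable {V : Type*} [Fintype V] [DecidableEq V]

/-- harmonic number -/
def harm (p : ℕ) : ℝ := ∑ ℓ ∈ Finset.range p, (1 : ℝ) / (ℓ + 1)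

/-- total edge weight -/
def totalW (E : Finset (Sym2 V)) (w : Sym2 V → ℝ) : ℝ := ∑ e ∈ E, w e

/-- winners of the vertex contest of `u` -/
def vWinners (s : V → V × Bool) (u : V) : Finset V :=
  univ.filter (fun i => (s i).1 = u)

/-- winners of the edge contest of edge `e` on side `side` -/
def eWinners (s : V → V × Bool) (e : Sym2 V) (side : Bool) : Finset V :=
  univ.filter (fun i => (s i).1 ∈ e ∧ (s i).2 = side)

/-- utility of player `i` in the max-cut reduction game -/
def mcUtil (E : Finset (Sym2 V)) (w : Sym2 V → ℝ) (s : V → V × Bool) (i : V) : ℝ :=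
  (4 * totalW E w + 2) / ((vWinners s (s i).1).card : ℝ)
  + ∑ e ∈ E, ∑ side : Bool,
      if i ∈ eWinners s e side then w e / ((eWinners s e side).card : ℝ) else 0

/-- the exact potential `φ(b) = Σ_contests v_j · H(n_j(b))` of the game -/
def mcPot (E : Finset (Sym2 V)) (w : Sym2 V → ℝ) (s : V → V × Bool) : ℝ :=
  (∑ u : V, (4 * totalW E w + 2) * harm ((vWinners s u).card))
  + ∑ e ∈ E, ∑ side : Bool, w e * harm ((eWinners s e side).card)

open scoped Classical in
/-- weight of the cut `(S, V \ S)` -/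
def cutWeight (E : Finset (Sym2 V)) (w : Sym2 V → ℝ) (S : Finset V) : ℝ :=
  ∑ e ∈ E, if (∃ a b : V, e = s(a, b) ∧ a ∈ S ∧ b ∉ S) then w e else 0

/-- moving vertex `v` to the other side of the cut -/
def flipCut (S : Finset V) (v : V) : Finset V :=
  if v ∈ S then S.erase v else insert v S

set_option maxHeartbeats 1000000
set_option linter.unusedSectionVars false

-- AUX

lemma mem_vW {s : V → V × Bool} {u i : V} : i ∈ vWinners s u ↔ (s i).1 = u := by
  simp [vWinners]

lemma mem_eW {s : V → V × Bool} {e : Sym2 V} {side : Bool} {i : V} :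
    i ∈ eWinners s e side ↔ (s i).1 ∈ e ∧ (s i).2 = side := by
  simp [eWinners]

lemma harm_zero : harm 0 = 0 := by simp [harm]
lemma harm_one : harm 1 = 1 := by simp [harm]
lemma harm_two : harm 2 = 3/2 := by
  simp [harm, Finset.sum_range_succ]; norm_num

variable {s : V → V × Bool} {ix : V → V}

lemma sfst_ix (hix : ∀ i u, (s i).1 = u ↔ i = ix u) (u : V) : (s (ix u)).1 = u :=
  (hix (ix u) u).mpr rfl

lemma ix_inj (hix : ∀ i u, (s i).1 = u ↔ i = ix u) : Function.Injective ix := by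
  intro a b h
  have ha := sfst_ix hix a
  rw [h, sfst_ix hix b] at ha
  exact ha.symm

lemma eW_card (hix : ∀ i u, (s i).1 = u ↔ i = ix u) {a b : V} (hab : a ≠ b) (side : Bool) :
    (eWinners s s(a,b) side).card
      = (if (s (ix a)).2 = side then 1 else 0) + (if (s (ix b)).2 = side then 1 else 0) := by
  have h1 : eWinners s s(a,b) side
      = ({ix a, ix b} : Finset V).filter (fun i => (s i).2 = side) := by
    ext i
    simp only [mem_eW, Finset.mem_filter, Finset.mem_insert, Finset.mem_singleton,
      Sym2.mem_iff, hix i a, hix i b]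
  have hne : ix a ≠ ix b := fun h => hab (ix_inj hix h)
  rw [h1]
  by_cases h2 : (s (ix a)).2 = side <;> by_cases h3 : (s (ix b)).2 = side <;>
    simp [Finset.filter_insert, Finset.filter_singleton, h2, h3, hne]

lemma mem_S_iff (hix : ∀ i u, (s i).1 = u ↔ i = ix u) (u : V) :
    (u ∈ univ.filter (fun u : V => ∃ i, s i = (u, true))) ↔ (s (ix u)).2 = true := by
  simp only [Finset.mem_filter, Finset.mem_univ, true_and]
  constructor
  · rintro ⟨i, hi⟩
    have h : i = ix u := (hix i u).mp (by rw [hi])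
    rw [← h, hi]
  · intro h
    exact ⟨ix u, Prod.ext (sfst_ix hix u) h⟩

lemma cutP_iff {T : Finset V} {a b : V} :
    (∃ a' b' : V, s(a,b) = s(a',b') ∧ a' ∈ T ∧ b' ∉ T)
      ↔ ((a ∈ T ∧ b ∉ T) ∨ (b ∈ T ∧ a ∉ T)) := by
  constructor
  · rintro ⟨a', b', he, h1, h2⟩
    rw [Sym2.eq_iff] at he
    rcases he with ⟨rfl, rfl⟩ | ⟨rfl, rfl⟩
    · exact Or.inl ⟨h1, h2⟩
    · exact Or.inr ⟨h1, h2⟩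
  · rintro (⟨h1, h2⟩ | ⟨h1, h2⟩)
    · exact ⟨a, b, rfl, h1, h2⟩
    · exact ⟨b, a, Sym2.eq_swap, h1, h2⟩

lemma mem_flipCut_self {S : Finset V} {v : V} : v ∈ flipCut S v ↔ v ∉ S := by
  unfold flipCut; by_cases h : v ∈ S <;> simp [h]

lemma mem_flipCut_ne {S : Finset V} {v x : V} (hx : x ≠ v) : x ∈ flipCut S v ↔ x ∈ S := by
  unfold flipCut; by_cases h : v ∈ S <;> simp [h, hx]

lemma inner_util (w : Sym2 V → ℝ) (s : V → V × Bool) (i : V) (e : Sym2 V) :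
    (∑ side : Bool, if i ∈ eWinners s e side then w e / ((eWinners s e side).card : ℝ) else 0)
      = if (s i).1 ∈ e then w e / ((eWinners s e (s i).2).card : ℝ) else 0 := by
  rw [Fintype.sum_bool]
  by_cases hv : (s i).1 ∈ e
  · cases h2 : (s i).2 <;> simp [mem_eW, hv, h2]
  · simp [mem_eW, hv]

lemma util_eq (E : Finset (Sym2 V)) (w : Sym2 V → ℝ)
    (hix : ∀ i u, (s i).1 = u ↔ i = ix u) (i : V) :
    mcUtil E w s i = (4 * totalW E w + 2)
      + ∑ e ∈ E, (if (s i).1 ∈ e then w e / ((eWinners s e (s i).2).card : ℝ) else 0) := by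
  unfold mcUtil
  have h1 : vWinners s (s i).1 = {ix ((s i).1)} := by
    ext j; simp [mem_vW, hix j (s i).1]
  rw [h1, Finset.card_singleton, Nat.cast_one, div_one,
    Finset.sum_congr rfl (fun e _ => inner_util w s i e)]


open scoped Classical in
lemma flip_key (E : Finset (Sym2 V)) (w : Sym2 V → ℝ) (hE : ∀ e ∈ E, ¬ e.IsDiag)
    (hix : ∀ i u, (s i).1 = u ↔ i = ix u) (v : V) :
    mcUtil E w s (ix v)
      - mcUtil E w (Function.update s (ix v) (v, !(s (ix v)).2)) (ix v)
    = (1/2) * (cutWeight E w (univ.filter (fun u : V => ∃ i, s i = (u, true)))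
        - cutWeight E w (flipCut (univ.filter (fun u : V => ∃ i, s i = (u, true))) v)) := by
  set i := ix v with hi
  set s' := Function.update s i (v, !(s i).2) with hs'
  set S := univ.filter (fun u : V => ∃ j, s j = (u, true)) with hS
  have hsv : (s i).1 = v := sfst_ix hix v
  have hfst : ∀ j, (s' j).1 = (s j).1 := by
    intro j
    by_cases hj : j = i
    · subst hj; rw [hs', Function.update_self, hsv]
    · rw [hs', Function.update_of_ne hj]
  have hix' : ∀ j u, (s' j).1 = u ↔ j = ix u := by
    intro j u; rw [hfst]; exact hix j u
  have hs'i2 : (s' i).2 = !(s i).2 := by rw [hs', Function.update_self]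
  have hs'i1 : (s' i).1 = v := by rw [hfst, hsv]
  rw [util_eq E w hix i, util_eq E w hix' i, hsv, hs'i1, hs'i2]
  have key : ∀ e ∈ E,
      (if v ∈ e then w e / ((eWinners s e (s i).2).card : ℝ) else 0)
        - (if v ∈ e then w e / ((eWinners s' e (!(s i).2)).card : ℝ) else 0)
      = (1/2) * ((if (∃ a b : V, e = s(a, b) ∧ a ∈ S ∧ b ∉ S) then w e else 0)
          - (if (∃ a b : V, e = s(a, b) ∧ a ∈ flipCut S v ∧ b ∉ flipCut S v) then w e else 0)) := by
    have main : ∀ u : V, u ≠ v → ∀ ee : Sym2 V, ee = s(v,u) →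
        w ee / ((eWinners s ee (s i).2).card : ℝ)
          - w ee / ((eWinners s' ee (!(s i).2)).card : ℝ)
        = (1/2) * ((if (∃ a b : V, ee = s(a, b) ∧ a ∈ S ∧ b ∉ S) then w ee else 0)
            - (if (∃ a b : V, ee = s(a, b) ∧ a ∈ flipCut S v ∧ b ∉ flipCut S v) then w ee else 0)) := by
      rintro u hu ee rfl
      have huv : v ≠ u := fun h => hu h.symm
      have hiu : ix u ≠ i := by
        intro h
        exact hu (ix_inj hix (h.trans hi))
      have hs'u2 : (s' (ix u)).2 = (s (ix u)).2 := by rw [hs', Function.update_of_ne hiu]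
      have c1 := eW_card (s := s) hix huv ((s i).2)
      have c2 := eW_card (s := s') hix' huv (!(s i).2)
      rw [← hi] at c1 c2
      rw [hs'i2, hs'u2] at c2
      have hSv : v ∈ S ↔ (s i).2 = true := by rw [hS, mem_S_iff hix v, hi]
      have hSu : u ∈ S ↔ (s (ix u)).2 = true := mem_S_iff hix u
      have hfv : v ∈ flipCut S v ↔ v ∉ S := mem_flipCut_self
      have hfu : u ∈ flipCut S v ↔ u ∈ S := mem_flipCut_ne hu
      rw [c1, c2]
      have hc1 : (∃ a b : V, s(v,u) = s(a, b) ∧ a ∈ S ∧ b ∉ S)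
          ↔ ((v ∈ S ∧ u ∉ S) ∨ (u ∈ S ∧ v ∉ S)) := cutP_iff
      have hc2 : (∃ a b : V, s(v,u) = s(a, b) ∧ a ∈ flipCut S v ∧ b ∉ flipCut S v)
          ↔ ((v ∈ flipCut S v ∧ u ∉ flipCut S v) ∨ (u ∈ flipCut S v ∧ v ∉ flipCut S v)) := cutP_iff
      rw [if_congr hc1 rfl rfl, if_congr hc2 rfl rfl]
      cases hc : (s i).2 <;> cases hcu : (s (ix u)).2 <;>
        simp only [hc, hcu, hSv, hSu, hfv, hfu] at * <;>
        norm_num [hSv, hSu, hfv, hfu] <;> ring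
    intro e he
    revert he
    induction e using Sym2.ind with
    | _ a b =>
      intro he
      have hab : a ≠ b := fun h => hE _ he (Sym2.mk_isDiag_iff.mpr h)
      by_cases hv : v ∈ s(a,b)
      · rw [if_pos hv, if_pos hv]
        rcases Sym2.mem_iff.mp hv with h | h
        · exact main b (fun hb => hab (h.symm.trans hb.symm)) s(a,b) (by rw [h])
        · exact main a (fun ha => hab (ha.trans h)) s(a,b) (by rw [h]; exact Sym2.eq_swap)
      · rw [if_neg hv, if_neg hv, sub_self]
        have ha : a ≠ v := fun h => hv (Sym2.mem_iff.mpr (Or.inl h.symm))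
        have hb : b ≠ v := fun h => hv (Sym2.mem_iff.mpr (Or.inr h.symm))
        have : (∃ a' b' : V, s(a,b) = s(a', b') ∧ a' ∈ S ∧ b' ∉ S)
            ↔ (∃ a' b' : V, s(a,b) = s(a', b') ∧ a' ∈ flipCut S v ∧ b' ∉ flipCut S v) := by
          rw [cutP_iff, cutP_iff, mem_flipCut_ne ha, mem_flipCut_ne hb]
        rw [if_congr this rfl rfl, sub_self, mul_zero]
  unfold cutWeight
  rw [add_sub_add_left_eq_sub, ← Finset.sum_sub_distrib, ← Finset.sum_sub_distrib,
    Finset.mul_sum]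
  exact Finset.sum_congr rfl key



open scoped Classical in
/-- For a profile in which exactly one player plays each vertex, the potential equals
`(4|V| + 3/2)·Σ w + 2|V| + (1/2)·cut(S, S̄)`, and the profile is a pure Nash equilibrium
iff the cut `(S, S̄)` is locally optimal for max-cut. -/
theorem potential_eq_cut_and_pne_iff_local_max
    (E : Finset (Sym2 V)) (w : Sym2 V → ℝ)
    (hE : ∀ e ∈ E, ¬ e.IsDiag) (hw : ∀ e ∈ E, 0 < w e)
    (s : V → V × Bool)
    (hone : ∀ u : V, (vWinners s u).card = 1) :
    mcPot E w s
      = (4 * (Fintype.card V : ℝ) + 3 / 2) * totalW E w + 2 * (Fintype.card V : ℝ)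
        + (1 / 2) * cutWeight E w (univ.filter (fun u : V => ∃ i, s i = (u, true))) ∧
    ((∀ i : V, ∀ a : V × Bool,
        mcUtil E w (Function.update s i a) i ≤ mcUtil E w s i) ↔
      (∀ v : V,
        cutWeight E w (flipCut (univ.filter (fun u : V => ∃ i, s i = (u, true))) v)
          ≤ cutWeight E w (univ.filter (fun u : V => ∃ i, s i = (u, true))))) := by

  have hex : ∀ u : V, ∃ j, vWinners s u = {j} := fun u => Finset.card_eq_one.mp (hone u)
  choose ix hix0 using hex
  have hix : ∀ i u, (s i).1 = u ↔ i = ix u := fun i u => by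
    rw [← mem_vW (s := s), hix0 u, Finset.mem_singleton]
  set S := univ.filter (fun u : V => ∃ i, s i = (u, true)) with hS
  constructor
  · -- potential formula
    unfold mcPot
    have h1 : ∑ u : V, (4 * totalW E w + 2) * harm ((vWinners s u).card)
        = (Fintype.card V : ℝ) * (4 * totalW E w + 2) := by
      rw [Finset.sum_congr rfl (fun u _ => by rw [hone u, harm_one, mul_one])]
      rw [Finset.sum_const, nsmul_eq_mul, Finset.card_univ]
    have h2 : ∀ e ∈ E, (∑ side : Bool, w e * harm ((eWinners s e side).card))
        = 3/2 * w e + 1/2 * (if (∃ a b : V, e = s(a,b) ∧ a ∈ S ∧ b ∉ S) then w e else 0) := by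
      intro e he
      revert he
      induction e using Sym2.ind with
      | _ a b =>
        intro he
        have hab : a ≠ b := fun h => hE _ he (Sym2.mk_isDiag_iff.mpr h)
        rw [Fintype.sum_bool, eW_card hix hab true, eW_card hix hab false,
          if_congr (cutP_iff (T := S)) rfl rfl]
        have hSa : a ∈ S ↔ (s (ix a)).2 = true := mem_S_iff hix a
        have hSb : b ∈ S ↔ (s (ix b)).2 = true := mem_S_iff hix b
        cases hfa : (s (ix a)).2 <;> cases hfb : (s (ix b)).2 <;>
          simp only [hfa, hfb] at hSa hSb <;>
          norm_num [hSa, hSb, harm_zero, harm_one, harm_two] <;> ring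
    rw [h1, Finset.sum_congr rfl h2, Finset.sum_add_distrib, ← Finset.mul_sum, ← Finset.mul_sum]
    have hcw : cutWeight E w S
        = ∑ e ∈ E, (if (∃ a b : V, e = s(a,b) ∧ a ∈ S ∧ b ∉ S) then w e else 0) := rfl
    have htw : totalW E w = ∑ e ∈ E, w e := rfl
    rw [← hcw, ← htw]
    ring
  · constructor
    · intro h v
      have hk := flip_key E w hE hix v
      have hle := h (ix v) (v, !(s (ix v)).2)
      rw [← hS] at hk
      linarith
    · intro h i a
      obtain ⟨u', side'⟩ := a
      by_cases hcase : u' = (s i).1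
      · subst hcase
        have hi : i = ix ((s i).1) := (hix i _).mp rfl
        by_cases hside : side' = (s i).2
        · subst hside
          rw [show ((s i).1, (s i).2) = s i from rfl, Function.update_eq_self]
        · have hside' : side' = !(s i).2 := by
            rcases Bool.eq_false_or_eq_true (s i).2 with h2 | h2 <;>
              rcases Bool.eq_false_or_eq_true side' with h3 | h3 <;>
                rw [h2, h3] <;>
                  first
                    | rfl
                    | (exfalso; exact hside (h3.trans h2.symm))
          subst hside'
          have hk := flip_key E w hE hix ((s i).1)
          rw [← hi, ← hS] at hk
          have hloc := h ((s i).1)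
          linarith
      · -- deviation to another vertex is never profitable
        have hW : 0 ≤ totalW E w := Finset.sum_nonneg fun e he => (hw e he).le
        have lower : 4 * totalW E w + 2 ≤ mcUtil E w s i := by
          rw [util_eq E w hix i]
          have h0 : (0:ℝ) ≤ ∑ e ∈ E,
              (if (s i).1 ∈ e then w e / ((eWinners s e (s i).2).card : ℝ) else 0) := by
            refine Finset.sum_nonneg fun e he => ?_
            split
            · exact div_nonneg (hw e he).le (Nat.cast_nonneg _)
            · exact le_refl 0
          linarith
        set s' := Function.update s i (u', side') with hs'
        have hfi : s' i = (u', side') := Function.update_self _ _ _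
        have upper : mcUtil E w s' i ≤ (4 * totalW E w + 2) / 2 + totalW E w := by
          unfold mcUtil
          have hne : ix u' ≠ i := fun hh => hcase (by rw [← sfst_ix hix u', hh])
          have hsub : ({i, ix u'} : Finset V) ⊆ vWinners s' (s' i).1 := by
            intro j hj
            rw [mem_vW]
            rcases Finset.mem_insert.mp hj with rfl | hj
            · rfl
            · rw [Finset.mem_singleton] at hj
              subst hj
              rw [hfi, hs', Function.update_of_ne hne]
              exact sfst_ix hix u'
          have hcard : (2:ℝ) ≤ ((vWinners s' (s' i).1).card : ℝ) := by
            have : ({i, ix u'} : Finset V).card ≤ (vWinners s' (s' i).1).card :=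
              Finset.card_le_card hsub
            rw [Finset.card_insert_of_notMem (by simp [Ne.symm hne]), Finset.card_singleton] at this
            exact_mod_cast this
          have hterm1 : (4 * totalW E w + 2) / ((vWinners s' (s' i).1).card : ℝ)
              ≤ (4 * totalW E w + 2) / 2 :=
            div_le_div_of_nonneg_left (by linarith) (by norm_num) hcard
          have hterm2 : (∑ e ∈ E, ∑ side : Bool,
              if i ∈ eWinners s' e side then w e / ((eWinners s' e side).card : ℝ) else 0)
              ≤ totalW E w := by
            have htw2 : totalW E w = ∑ e ∈ E, w e := rfl
            rw [htw2]
            refine Finset.sum_le_sum fun e he => ?_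
            rw [inner_util]
            split
            · next hmem =>
              have hc1 : 1 ≤ (eWinners s' e (s' i).2).card :=
                Finset.card_pos.mpr ⟨i, mem_eW.mpr ⟨hmem, rfl⟩⟩
              exact div_le_self (hw e he).le (by exact_mod_cast hc1)
            · exact (hw e he).le
          exact add_le_add hterm1 hterm2
        linarith

end MaxCutPotential
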